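/- Define K(k) = ∫_0^{π/2} (1 − k² sin²θ)^{-1/2} dθ for 0 ≤ k < 1 (the complete elliptic integral of the first kind). Then for every λ with 0 < λ < 1 (Landen's descending transformation): K(√(1−λ)) = (2/(1+√λ)) · K((1−√λ)/(1+√λ)). -/

import Mathlib

/-!
Landen's substitution `φ = 2θ - arctan ((1 - p) sin θ cos θ / (cos² θ + p sin² θ))` maps
`[0, π/2]` onto `[0, π]` and satisfies `sin φ = (1 + p) sin θ cos θ / √(cos² θ + p² sin² θ)`.
Hence, with `k₁ = (1 - p) / (1 + p)`, it turns `dφ / √(1 - k₁² sin² φ)` into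
`(1 + p) dθ / √(cos² θ + p² sin² θ) = (1 + p) dθ / √(1 - (1 - p²) sin² θ)`.
Since `sin (π - φ) = sin φ`, the integral over `[0, π]` is twice `K k₁`; finally take `p = √λ`.
-/

open Real

noncomputable def K (k : ℝ) : ℝ := ∫ θ in (0:ℝ)..(π/2), 1 / Real.sqrt (1 - k^2 * Real.sin θ ^ 2)

theorem intervalIntegral.integral_eq_two_mul_integral_half_of_symm {f : ℝ → ℝ} {a : ℝ}
    (ha : 0 ≤ a) (hf : IntervalIntegrable f MeasureTheory.volume 0 a)
    (hsymm : ∀ x, f (a - x) = f x) :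
    ∫ x in 0..a, f x = 2 * ∫ x in 0..a / 2, f x := by
  have hmid : a / 2 ∈ Set.uIcc 0 a := Set.mem_uIcc_of_le (by linarith) (by linarith)
  have hupper : ∫ x in a / 2..a, f x = ∫ x in 0..a / 2, f x := by
    simpa [hsymm, sub_half] using (integral_comp_sub_left f a (a := 0) (b := a / 2)).symm
  rw [← integral_add_adjacent_intervals (hf.mono_set (Set.uIcc_subset_uIcc_left hmid))
    (hf.mono_set (Set.uIcc_subset_uIcc_right hmid)), hupper]
  ring

namespace Landen

noncomputable def quad (p θ : ℝ) : ℝ := cos θ ^ 2 + p * sin θ ^ 2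

theorem quad_pos {p : ℝ} (hp : 0 < p) (θ : ℝ) : 0 < quad p θ := by
  unfold quad
  nlinarith [sin_sq_add_cos_sq θ, sq_nonneg (cos θ), mul_nonneg hp.le (sq_nonneg (sin θ)),
    mul_nonneg hp.le (sq_nonneg (cos θ))]

theorem one_sub_sq_mul_sin_sq (k θ : ℝ) : 1 - k ^ 2 * sin θ ^ 2 = quad (1 - k ^ 2) θ := by
  unfold quad; linear_combination -sin_sq_add_cos_sq θ

theorem sq_add_quad_sq (p θ : ℝ) :
    ((1 - p) * sin θ * cos θ) ^ 2 + quad p θ ^ 2 = quad (p ^ 2) θ := by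
  unfold quad
  linear_combination (p ^ 2 * sin θ ^ 2 + cos θ ^ 2) * sin_sq_add_cos_sq θ

theorem hasDerivAt_quad (p θ : ℝ) : HasDerivAt (quad p) (-2 * (1 - p) * sin θ * cos θ) θ :=
  (((hasDerivAt_cos θ).fun_pow 2).fun_add (((hasDerivAt_sin θ).fun_pow 2).const_mul p)).congr_deriv
    (by ring)

-- Landen's `θ + arctan (p tan θ)`, written so that it is smooth on all of `ℝ`.
noncomputable def angle (p θ : ℝ) : ℝ := 2 * θ - arctan ((1 - p) * sin θ * cos θ / quad p θ)

theorem angle_zero (p : ℝ) : angle p 0 = 0 := by simp [angle]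

theorem angle_pi_div_two (p : ℝ) : angle p (π / 2) = π := by simp [angle]; ring

theorem one_add_sq_div_quad {p : ℝ} (hp : 0 < p) (θ : ℝ) :
    1 + ((1 - p) * sin θ * cos θ / quad p θ) ^ 2 = quad (p ^ 2) θ / quad p θ ^ 2 := by
  have := (quad_pos hp θ).ne'
  rw [← sq_add_quad_sq]
  field_simp
  ring

theorem hasDerivAt_angle {p : ℝ} (hp : 0 < p) (θ : ℝ) :
    HasDerivAt (angle p) ((1 + p) * quad p θ / quad (p ^ 2) θ) θ := by
  have hnum : HasDerivAt (fun θ => (1 - p) * sin θ * cos θ)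
      ((1 - p) * (cos θ ^ 2 - sin θ ^ 2)) θ :=
    (((hasDerivAt_sin θ).const_mul (1 - p)).fun_mul (hasDerivAt_cos θ)).congr_deriv (by ring)
  refine (((hasDerivAt_id θ).const_mul 2).fun_sub
    ((hnum.fun_div (hasDerivAt_quad p θ) (quad_pos hp θ).ne').arctan)).congr_deriv ?_
  have h1 := (quad_pos hp θ).ne'
  have h2 := (quad_pos (pow_pos hp 2) θ).ne'
  rw [one_add_sq_div_quad hp]
  field_simp
  unfold quad
  linear_combination -(1 - p) * (cos θ ^ 2 - p * sin θ ^ 2) * sin_sq_add_cos_sq θ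

theorem sin_angle {p : ℝ} (hp : 0 < p) (θ : ℝ) :
    sin (angle p θ) = (1 + p) * sin θ * cos θ / √(quad (p ^ 2) θ) := by
  have h1 := quad_pos hp θ
  have h2 := sqrt_pos.2 (quad_pos (pow_pos hp 2) θ)
  have hroot : √(1 + ((1 - p) * sin θ * cos θ / quad p θ) ^ 2) = √(quad (p ^ 2) θ) / quad p θ := by
    rw [one_add_sq_div_quad hp, sqrt_div' _ (sq_nonneg _), sqrt_sq h1.le]
  rw [angle, sin_sub, sin_arctan, cos_arctan, hroot, sin_two_mul, cos_two_mul']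
  field_simp
  unfold quad
  linear_combination (1 + p) * sin θ * cos θ * sin_sq_add_cos_sq θ

theorem one_sub_sq_mul_sin_sq_angle {p : ℝ} (hp : 0 < p) (θ : ℝ) :
    1 - ((1 - p) / (1 + p)) ^ 2 * sin (angle p θ) ^ 2 = quad p θ ^ 2 / quad (p ^ 2) θ := by
  have h1 : 0 < 1 + p := by linarith
  have h2 := quad_pos (pow_pos hp 2) θ
  rw [sin_angle hp, div_pow _ √_, sq_sqrt h2.le]
  field_simp
  linear_combination -sq_add_quad_sq p θ

theorem one_sub_sq_div_sq_pos {p : ℝ} (hp : 0 < p) : 0 < 1 - ((1 - p) / (1 + p)) ^ 2 := by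
  rw [div_pow, one_sub_div (by positivity)]
  have : (1 + p) ^ 2 - (1 - p) ^ 2 = 4 * p := by ring
  rw [this]
  positivity

theorem integrand_angle_mul_deriv {p : ℝ} (hp : 0 < p) (θ : ℝ) :
    1 / √(1 - ((1 - p) / (1 + p)) ^ 2 * sin (angle p θ) ^ 2) *
        ((1 + p) * quad p θ / quad (p ^ 2) θ) = (1 + p) / √(quad (p ^ 2) θ) := by
  have h1 := quad_pos hp θ
  have h2 := quad_pos (pow_pos hp 2) θ
  rw [one_sub_sq_mul_sin_sq_angle hp, sqrt_div' _ h2.le, sqrt_sq h1.le]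
  field_simp
  rw [sq_sqrt h2.le]

theorem one_add_mul_integral_eq_two_mul_K {p : ℝ} (hp : 0 < p) :
    (1 + p) * ∫ θ in 0..π / 2, 1 / √(quad (p ^ 2) θ) =
      2 * K ((1 - p) / (1 + p)) := by
  set g : ℝ → ℝ := fun x => 1 / √(1 - ((1 - p) / (1 + p)) ^ 2 * sin x ^ 2) with hg_def
  have hg : Continuous g := by
    refine continuous_const.div (by fun_prop) fun x => (sqrt_pos.2 ?_).ne'
    rw [one_sub_sq_mul_sin_sq]
    exact quad_pos (one_sub_sq_div_sq_pos hp) x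
  have hderiv : Continuous fun θ => (1 + p) * quad p θ / quad (p ^ 2) θ := by
    refine Continuous.div (by unfold quad; fun_prop) (by unfold quad; fun_prop) fun θ => ?_
    exact (quad_pos (pow_pos hp 2) θ).ne'
  calc (1 + p) * ∫ θ in 0..π / 2, 1 / √(quad (p ^ 2) θ)
      = ∫ θ in 0..π / 2, (g ∘ angle p) θ * ((1 + p) * quad p θ / quad (p ^ 2) θ) := by
        rw [← intervalIntegral.integral_const_mul]
        congr 1 with θ
        rw [Function.comp_apply, hg_def, integrand_angle_mul_deriv hp, mul_one_div]
    _ = ∫ x in 0..π, g x := by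
        rw [intervalIntegral.integral_comp_mul_deriv (fun θ _ => hasDerivAt_angle hp θ)
          hderiv.continuousOn hg, angle_zero, angle_pi_div_two]
    _ = 2 * K ((1 - p) / (1 + p)) :=
        intervalIntegral.integral_eq_two_mul_integral_half_of_symm pi_pos.le
          (hg.intervalIntegrable _ _) fun x => by simp only [hg_def, sin_pi_sub]

end Landen

theorem K_sqrt_one_sub_sq {p : ℝ} (hp0 : 0 < p) (hp1 : p ≤ 1) :
    K √(1 - p ^ 2) = 2 / (1 + p) * K ((1 - p) / (1 + p)) := by
  have hK : K √(1 - p ^ 2) = ∫ θ in 0..π / 2, 1 / √(Landen.quad (p ^ 2) θ) := by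
    simp only [K, Landen.one_sub_sq_mul_sin_sq]
    simp only [sq_sqrt (by nlinarith : 0 ≤ 1 - p ^ 2), sub_sub_cancel]
  rw [hK, div_mul_eq_mul_div, eq_div_iff (by linarith), mul_comm,
    Landen.one_add_mul_integral_eq_two_mul_K hp0]

theorem stmt_8 (l : ℝ) (h₀ : 0 < l) (h₁ : l < 1) :
    K (Real.sqrt (1 - l)) =
      (2 / (1 + Real.sqrt l)) * K ((1 - Real.sqrt l) / (1 + Real.sqrt l)) := by
  simpa only [sq_sqrt h₀.le] using K_sqrt_one_sub_sq (sqrt_pos.2 h₀) (sqrt_le_one.2 h₁.le)
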